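/- arXiv:2404.17921 — 5 statements merged into one kernel-verified Lean document; each statement's English description precedes it below -/
import Mathlib

section
/- Let a, b ∈ ℤ with a ≠ 0 and let G(x) = x⁸ + a·x⁶ + b·x⁴ + a·x² + 1. If there exists a prime q such that q² divides b+2−2a or q² divides b+2+2a, then G(x) is not monogenic. -/
/-!
For `ε = ±1` put `W = b + 2 + 2εa` and `k = X⁴ + (a + 2ε)X² + (b + 2εa + 3)`; then
`G = (X² - ε)² k + W (2εX² - 1)`. If `q² ∣ W` and `θ` is a root of `G`, the element
`γ = (θ² - ε) k(θ) / q` satisfies `γ² = -k(θ) (W / q²) (2εθ² - 1) ∈ ℤ[θ]`, so `γ` is integral.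
It does not lie in `ℤ[θ]`: otherwise `G` would divide `q P - (X² - ε) k` for some `P ∈ ℤ[X]`,
and reducing modulo the monic `G` would write the monic sextic `(X² - ε) k` as `q` times a
polynomial, forcing `q` to be a unit.
-/

open Polynomial

/-- A monic polynomial `f ∈ ℤ[x]` is *monogenic* if it is irreducible over `ℚ` and,
for any number field `K` generated over `ℚ` by a root `θ` of `f`, the ring `ℤ[θ]`
is the full ring of integers (the integral closure of `ℤ`) of `K`. -/
def IsMonogenic (f : Polynomial ℤ) : Prop :=
  f.Monic ∧ Irreducible (f.map (Int.castRingHom ℚ)) ∧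
    ∀ (K : Type) [Field K] [NumberField K] (θ : K),
      Polynomial.aeval θ f = 0 →
      Algebra.adjoin ℚ {θ} = (⊤ : Subalgebra ℚ K) →
      Algebra.adjoin ℤ {θ} = integralClosure ℤ K

namespace Polynomial

theorem Monic.not_dvd_C_mul_sub {R : Type*} [CommRing R] {f p : R[X]} {q : R}
    (hf : f.Monic) (hp : p.Monic) (hdeg : p.degree < f.degree) (hq : ¬IsUnit q) (P : R[X]) :
    ¬f ∣ C q * P - p := by
  intro hdvd
  cases subsingleton_or_nontrivial R
  · exact hq (isUnit_of_subsingleton q)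
  have hpq : p = C q * (P %ₘ f) := by
    rw [← (modByMonic_eq_self_iff hf).2 hdeg, ← modByMonic_eq_of_dvd_sub hf hdvd, C_mul',
      smul_modByMonic, ← C_mul']
  have hcoeff := congrArg (coeff · p.natDegree) hpq
  simp only [coeff_C_mul, hp.coeff_natDegree] at hcoeff
  exact hq (IsUnit.of_mul_eq_one _ hcoeff.symm)

theorem Monic.dvd_of_aeval_eq_zero {K : Type*} [Field K] [CharZero K] {f P : ℤ[X]} {θ : K}
    (hf : f.Monic) (hirr : Irreducible (f.map (Int.castRingHom ℚ))) (hθ : aeval θ f = 0)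
    (hP : aeval θ P = 0) : f ∣ P := by
  have hmap : ∀ Q : ℤ[X], aeval θ (Q.map (Int.castRingHom ℚ)) = aeval θ Q :=
    aeval_map_algebraMap ℚ θ
  rw [← map_dvd_map (Int.castRingHom ℚ) Int.cast_injective hf,
    minpoly.eq_of_irreducible_of_monic hirr (by rw [hmap, hθ]) (hf.map _)]
  exact minpoly.dvd ℚ θ (by rw [hmap, hP])

end Polynomial

theorem adjoin_ne_integralClosure_of_eq_sq_mul_add_sq_mul {K : Type*} [Field K] [CharZero K]
    {θ : K} {f g h r : ℤ[X]} {q : ℤ} (hf : f.Monic)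
    (hirr : Irreducible (f.map (Int.castRingHom ℚ))) (hθ : aeval θ f = 0) (hq : Prime q)
    (hgh : (g * h).Monic) (hdeg : (g * h).degree < f.degree) (hfgh : f = g ^ 2 * h + C q ^ 2 * r) :
    Algebra.adjoin ℤ {θ} ≠ integralClosure ℤ K := by
  intro hA
  have hq0 : (q : K) ≠ 0 := Int.cast_ne_zero.mpr hq.ne_zero
  set γ : K := (q : K)⁻¹ * aeval θ (g * h)
  have hγsq : γ ^ 2 = aeval θ (-(h * r)) := by
    have := congrArg (aeval θ) hfgh
    simp only [hθ, map_add, map_mul, map_pow, aeval_C, algebraMap_int_eq,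
      Int.coe_castRingHom] at this
    simp only [γ, map_neg, map_mul]
    field_simp
    linear_combination -aeval θ h * this
  have hγ : γ ∈ Algebra.adjoin ℤ {θ} := by
    rw [hA]
    refine IsIntegral.of_pow two_pos ?_
    rw [hγsq, ← mem_integralClosure_iff, ← hA]
    exact aeval_mem_adjoin_singleton ℤ θ
  obtain ⟨P, hP⟩ : ∃ P : ℤ[X], aeval θ P = γ := by
    rwa [Algebra.adjoin_singleton_eq_range_aeval] at hγ
  refine hf.not_dvd_C_mul_sub hgh hdeg hq.not_isUnit P (hf.dvd_of_aeval_eq_zero hirr hθ ?_)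
  rw [map_sub, map_mul, aeval_C, hP, algebraMap_int_eq, eq_intCast, mul_inv_cancel_left₀ hq0,
    sub_self]

theorem not_isMonogenic_of_eq_sq_mul_add_sq_mul {f g h r : ℤ[X]} {q : ℤ} (hq : Prime q)
    (hgh : (g * h).Monic) (hdeg : (g * h).degree < f.degree) (hfgh : f = g ^ 2 * h + C q ^ 2 * r) :
    ¬IsMonogenic f := by
  rintro ⟨hf, hirr, hK⟩
  have := Fact.mk hirr
  set θ := AdjoinRoot.root (f.map (Int.castRingHom ℚ))
  have hθ : aeval θ f = 0 := by
    rw [← aeval_map_algebraMap ℚ]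
    exact AdjoinRoot.aeval_eq _ |>.trans AdjoinRoot.mk_self
  exact adjoin_ne_integralClosure_of_eq_sq_mul_add_sq_mul hf hirr hθ hq hgh hdeg hfgh
    (hK _ θ hθ AdjoinRoot.adjoinRoot_eq_top)

theorem octic_eq_sq_mul_add (a b ε : ℤ) (hε : ε = 1 ∨ ε = -1) :
    (X ^ 8 + C a * X ^ 6 + C b * X ^ 4 + C a * X ^ 2 + 1 : ℤ[X]) =
      (X ^ 2 - C ε) ^ 2 * (X ^ 4 + C (a + 2 * ε) * X ^ 2 + C (b + 2 * a * ε + 3)) +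
        C (b + 2 + 2 * a * ε) * (C (2 * ε) * X ^ 2 - 1) := by
  rcases hε with rfl | rfl <;> simp only [map_add, map_mul, map_neg, map_one, map_ofNat] <;> ring

theorem stmt_1_general (a b : ℤ)
    (hq : ∃ q : ℤ, Prime q ∧ (q ^ 2 ∣ (b + 2 - 2 * a) ∨ q ^ 2 ∣ (b + 2 + 2 * a))) :
    ¬ IsMonogenic (X ^ 8 + C a * X ^ 6 + C b * X ^ 4 + C a * X ^ 2 + 1) := by
  obtain ⟨q, hq, hdvd⟩ := hq
  obtain ⟨ε, hε, w, hw⟩ : ∃ ε : ℤ, (ε = 1 ∨ ε = -1) ∧ ∃ w, b + 2 + 2 * a * ε = q ^ 2 * w := by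
    rcases hdvd with ⟨w, hw⟩ | ⟨w, hw⟩
    · exact ⟨-1, .inr rfl, w, by linarith⟩
    · exact ⟨1, .inl rfl, w, by linarith⟩
  refine not_isMonogenic_of_eq_sq_mul_add_sq_mul hq (g := X ^ 2 - C ε)
    (h := X ^ 4 + C (a + 2 * ε) * X ^ 2 + C (b + 2 * a * ε + 3))
    (r := C w * (C (2 * ε) * X ^ 2 - 1)) ?_ ?_ ?_
  · monicity!
  · apply (lt_of_le_of_lt (b := 6) (by compute_degree) (by decide : (6 : WithBot ℕ) < 8)).trans_eq
    symm
    compute_degree!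
  · rw [octic_eq_sq_mul_add a b ε hε, hw, map_mul, map_pow]
    ring

theorem stmt_1 (a b : ℤ) (ha : a ≠ 0)
    (hq : ∃ q : ℤ, Prime q ∧ (q ^ 2 ∣ (b + 2 - 2 * a) ∨ q ^ 2 ∣ (b + 2 + 2 * a))) :
    ¬ IsMonogenic (X ^ 8 + C a * X ^ 6 + C b * X ^ 4 + C a * X ^ 2 + 1) :=
  stmt_1_general a b hq
end

section
/- Let a, b ∈ ℤ with a ≠ 0 and let G(x) = x⁸ + a·x⁶ + b·x⁴ + a·x² + 1. If both b+2−2a and b+2+2a are squarefree integers and there exists a prime q ≥ 3 such that q² divides a²−4b+8, then G(x) is not monogenic. -/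
open Polynomial

/-!
Put `θ` a root of `G` in `K = ℚ(θ)`. The element `w = 2 (θ² + θ⁻²) + a` lies in `ℤ[θ]` and
satisfies `w² = a² - 4b + 8 = q² m`, so `w / q` is an algebraic integer. If `ℤ[θ]` were the
ring of integers, then `w / q = g(θ)` for some `g ∈ ℤ[X]`, so `G ∣ q g - w(X)`; reducing `g`
modulo the monic `G` shows that `q` divides every coefficient of `w(X)`, one of which is `2`.
-/

theorem IsMonogenic.exists_adjoin_eq_integralClosure {f : ℤ[X]} (hf : IsMonogenic f) :
    ∃ (K : Type) (_ : Field K) (_ : NumberField K) (θ : K),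
      aeval θ f = 0 ∧ minpoly ℚ θ = f.map (algebraMap ℤ ℚ) ∧
        Algebra.adjoin ℤ {θ} = integralClosure ℤ K := by
  obtain ⟨hmonic, hirr, hint⟩ := hf
  rw [← algebraMap_int_eq] at hirr
  have : Fact (Irreducible (f.map (algebraMap ℤ ℚ))) := ⟨hirr⟩
  set θ := AdjoinRoot.root (f.map (algebraMap ℤ ℚ))
  have hmin : minpoly ℚ θ = f.map (algebraMap ℤ ℚ) :=
    AdjoinRoot.minpoly_powerBasis_gen_of_monic (hmonic.map _) hirr.ne_zero
  have hroot : aeval θ f = 0 := by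
    rw [← aeval_map_algebraMap ℚ]
    exact AdjoinRoot.aeval_eq _ |>.trans AdjoinRoot.mk_self
  exact ⟨_, _, inferInstance, θ, hroot, hmin, hint _ θ hroot AdjoinRoot.adjoinRoot_eq_top⟩

theorem Polynomial.C_dvd_of_monic_dvd_C_mul_sub {R : Type*} [CommRing R] [IsDomain R]
    {f g p : R[X]} (c : R) (hf : f.Monic) (hp : p.degree < f.degree) (h : f ∣ C c * g - p) :
    C c ∣ p := by
  have hdvd : f ∣ C c * (g %ₘ f) - p := by
    have : C c * (g %ₘ f) - p = (C c * g - p) - f * (C c * (g /ₘ f)) := by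
      rw [modByMonic_eq_sub_mul_div]; ring
    exact this ▸ dvd_sub h (dvd_mul_right _ _)
  have hdeg : (C c * (g %ₘ f) - p).degree < f.degree :=
    (degree_sub_le _ _).trans_lt <| max_lt
      ((smul_eq_C_mul c ▸ degree_smul_le c _).trans_lt (degree_modByMonic_lt g hf)) hp
  exact ⟨g %ₘ f, (sub_eq_zero.mp (eq_zero_of_dvd_of_degree_lt hdvd hdeg)).symm⟩

theorem Polynomial.C_dvd_of_aeval_div_mem_adjoin {K : Type*} [Field K] [CharZero K] {θ : K}
    {f p : ℤ[X]} (hf : f.Monic) (hmin : minpoly ℚ θ = f.map (algebraMap ℤ ℚ))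
    (hp : p.degree < f.degree) {q : ℤ} (hq : q ≠ 0)
    (hmem : aeval θ p / q ∈ Algebra.adjoin ℤ {θ}) : C q ∣ p := by
  rw [Algebra.adjoin_singleton_eq_range_aeval] at hmem
  obtain ⟨g, hg⟩ := hmem
  have hroot : aeval θ (C q * g - p) = 0 := by
    have : (q : K) * aeval θ g = aeval θ p := by
      rw [show aeval θ g = aeval θ p / q from hg, mul_div_cancel₀ _ (Int.cast_ne_zero.mpr hq)]
    simp [this]
  have hdvd : f ∣ C q * g - p := by
    refine (map_dvd_map (algebraMap ℤ ℚ) (RingHom.injective_int _) hf).mp ?_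
    rw [← hmin]
    exact minpoly.dvd ℚ θ (by rwa [aeval_map_algebraMap])
  exact C_dvd_of_monic_dvd_C_mul_sub q hf hp hdvd

noncomputable def palindromicOctic (a b : ℤ) : ℤ[X] :=
  X ^ 8 + C a * X ^ 6 + C b * X ^ 4 + C a * X ^ 2 + 1

/-- At a root `θ` of `palindromicOctic a b` this evaluates to `2 (θ² + θ⁻²) + a`, using
`θ⁻² = -(θ⁶ + a θ⁴ + b θ² + a)`. Since `z = θ² + θ⁻²` is a root of `z² + a z + b - 2`,
its square is the discriminant `a² - 4b + 8`. -/
noncomputable def sqrtDiscrPoly (a b : ℤ) : ℤ[X] :=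
  C 2 * X ^ 6 + C (2 * a) * X ^ 4 + C (2 * b - 2) * X ^ 2 + C a

theorem aeval_sqrtDiscrPoly_sq {R : Type*} [CommRing R] {a b : ℤ} {θ : R}
    (h : aeval θ (palindromicOctic a b) = 0) :
    aeval θ (sqrtDiscrPoly a b) ^ 2 = a ^ 2 - 4 * b + 8 := by
  simp only [palindromicOctic, sqrtDiscrPoly, map_add, map_sub, map_mul, map_one, map_pow,
    map_ofNat, aeval_X, eq_intCast, map_intCast] at h ⊢
  linear_combination (4 * θ ^ 4 + 4 * (a : R) * θ ^ 2 + 4 * (b : R) - 8) * h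

theorem degree_sqrtDiscrPoly_lt (a b : ℤ) :
    (sqrtDiscrPoly a b).degree < (palindromicOctic a b).degree := by
  have h8 : (palindromicOctic a b).degree = 8 := by
    unfold palindromicOctic
    compute_degree!
  rw [h8]
  exact (show (sqrtDiscrPoly a b).degree ≤ 6 by unfold sqrtDiscrPoly; compute_degree).trans_lt
    (by decide)

theorem coeff_sqrtDiscrPoly_six (a b : ℤ) : (sqrtDiscrPoly a b).coeff 6 = 2 := by
  simp only [sqrtDiscrPoly, coeff_add, coeff_C_mul, coeff_X_pow, coeff_C]
  norm_num

theorem stmt_2_general (a b : ℤ)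
    (hq : ∃ q : ℕ, q.Prime ∧ 3 ≤ q ∧ (q : ℤ) ^ 2 ∣ (a ^ 2 - 4 * b + 8)) :
    ¬ IsMonogenic (X ^ 8 + C a * X ^ 6 + C b * X ^ 4 + C a * X ^ 2 + 1) := by
  obtain ⟨q, -, hq3, m, hm⟩ := hq
  intro hG
  obtain ⟨K, _, _, θ, hroot, hmin, hint⟩ := hG.exists_adjoin_eq_integralClosure
  have hq0 : ((q : ℤ) : K) ≠ 0 := by exact_mod_cast (show q ≠ 0 by omega)
  have hsq : (aeval θ (sqrtDiscrPoly a b) / (q : ℤ)) ^ 2 = algebraMap ℤ K m := by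
    rw [div_pow, aeval_sqrtDiscrPoly_sq hroot, div_eq_iff (pow_ne_zero 2 hq0), eq_intCast]
    exact_mod_cast hm.trans (mul_comm _ _)
  have hmem : aeval θ (sqrtDiscrPoly a b) / (q : ℤ) ∈ Algebra.adjoin ℤ {θ} :=
    hint ▸ IsIntegral.of_pow two_pos (hsq ▸ isIntegral_algebraMap)
  have hdvd := C_dvd_of_aeval_div_mem_adjoin hG.1 hmin (degree_sqrtDiscrPoly_lt a b)
    (by omega) hmem
  have h2 : (q : ℤ) ∣ 2 := coeff_sqrtDiscrPoly_six a b ▸ (C_dvd_iff_dvd_coeff _ _).mp hdvd 6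
  have := Int.le_of_dvd two_pos h2
  omega

theorem stmt_2 (a b : ℤ) (ha : a ≠ 0)
    (h1 : Squarefree (b + 2 - 2 * a)) (h2 : Squarefree (b + 2 + 2 * a))
    (hq : ∃ q : ℕ, q.Prime ∧ 3 ≤ q ∧ (q : ℤ) ^ 2 ∣ (a ^ 2 - 4 * b + 8)) :
    ¬ IsMonogenic (X ^ 8 + C a * X ^ 6 + C b * X ^ 4 + C a * X ^ 2 + 1) :=
  stmt_2_general a b hq
end

section
/- Let a, b ∈ ℤ with a ≠ 0 and let G(x) = x⁸ + a·x⁶ + b·x⁴ + a·x² + 1. Suppose that b+2−2a and b+2+2a are squarefree integers, that a²−4b+8 is not divisible by the square of any odd prime, and that (a mod 4, b mod 4) ∈ {(0,1), (2,3)}. Then G(x) is not monogenic. -/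
open Polynomial

theorem Polynomial.Monic.dvd_of_aeval_root_eq_zero {G f : ℤ[X]} (hG : G.Monic)
    (hf : aeval (AdjoinRoot.root (G.map (Int.castRingHom ℚ))) f = 0) : G ∣ f := by
  rwa [← map_dvd_map (Int.castRingHom ℚ) Int.cast_injective hG, ← AdjoinRoot.mk_eq_zero,
    ← AdjoinRoot.aeval_eq, ← algebraMap_int_eq, aeval_map_algebraMap]

theorem IsMonogenic.exists_dvd_sub_of_pow_eq {G v w r : ℤ[X]} (hG : IsMonogenic G)
    {n : ℕ} (hn : 0 < n) {p : ℤ} (hp : p ≠ 0) (h : v ^ n = G * w + C (p ^ n) * r) :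
    ∃ u : ℤ[X], G ∣ C p * u - v := by
  obtain ⟨hmonic, hirr, hmax⟩ := hG
  have : Fact (Irreducible (G.map (Int.castRingHom ℚ))) := ⟨hirr⟩
  have hroot : aeval (AdjoinRoot.root (G.map (Int.castRingHom ℚ))) G = 0 := by
    rw [← aeval_map_algebraMap ℚ, algebraMap_int_eq]
    exact (AdjoinRoot.aeval_eq _).trans AdjoinRoot.mk_self
  set θ := AdjoinRoot.root (G.map (Int.castRingHom ℚ))
  have hclosure := hmax _ θ hroot AdjoinRoot.adjoinRoot_eq_top
  rw [Algebra.adjoin_singleton_eq_range_aeval] at hclosure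
  have hp' : (p : AdjoinRoot (G.map (Int.castRingHom ℚ))) ≠ 0 := Int.cast_ne_zero.mpr hp
  have hpow : (aeval θ v / p) ^ n = aeval θ r := by
    rw [div_pow, ← map_pow, h, map_add, map_mul, hroot, zero_mul, zero_add, map_mul, aeval_C,
      eq_intCast, Int.cast_pow, mul_div_cancel_left₀ _ (pow_ne_zero n hp')]
  have hintegral : IsIntegral ℤ (aeval θ v / p) := by
    refine IsIntegral.of_pow hn (hpow ▸ ?_)
    exact (hclosure ▸ ⟨r, rfl⟩ : aeval θ r ∈ integralClosure ℤ _)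
  obtain ⟨u, hu⟩ : aeval θ v / p ∈ (aeval θ).range := by rw [hclosure]; exact hintegral
  refine ⟨u, hmonic.dvd_of_aeval_root_eq_zero ?_⟩
  change aeval θ _ = 0
  rw [map_sub, map_mul, aeval_C, eq_intCast, show aeval θ u = _ from hu, mul_div_cancel₀ _ hp',
    sub_self]

theorem Polynomial.Monic.not_dvd_C_mul_sub_s3 {G v : ℤ[X]} (hG : G.Monic) {p : ℕ} [Fact p.Prime]
    (hv : v.map (Int.castRingHom (ZMod p)) ≠ 0) (hdeg : v.natDegree < G.natDegree) (u : ℤ[X]) :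
    ¬ G ∣ C (p : ℤ) * u - v := by
  intro hdvd
  have hdvd_mod := map_dvd (Int.castRingHom (ZMod p)) hdvd
  rw [Polynomial.map_sub, Polynomial.map_mul, map_C, eq_intCast, Int.cast_natCast,
    ZMod.natCast_self, C_0, zero_mul, zero_sub, dvd_neg] at hdvd_mod
  have := natDegree_le_of_dvd hdvd_mod hv
  rw [hG.natDegree_map] at this
  exact (natDegree_map_le.trans_lt hdeg).not_ge this

theorem not_isMonogenic_of_pow_eq {G v w r : ℤ[X]} {n p : ℕ} [hp : Fact p.Prime] (hn : 0 < n)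
    (hv : v.map (Int.castRingHom (ZMod p)) ≠ 0) (hdeg : v.natDegree < G.natDegree)
    (h : v ^ n = G * w + C ((p : ℤ) ^ n) * r) : ¬ IsMonogenic G := fun hG =>
  let ⟨u, hu⟩ := hG.exists_dvd_sub_of_pow_eq hn (by exact_mod_cast hp.out.ne_zero) h
  hG.1.not_dvd_C_mul_sub_s3 hv hdeg u hu

theorem exists_sq_cube_eq_mul_add_four_mul (m t : ℤ) :
    ∃ w r : ℤ[X], ((X ^ 2 + X + 1) ^ 3) ^ 2 =
      (X ^ 8 + C (2 * m) * X ^ 6 + C (2 * m + 1 + 4 * t) * X ^ 4 + C (2 * m) * X ^ 2 + 1) * w +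
        C (2 ^ 2) * r := by
  -- `g⁴ = G + 2e` and `e = 2e' - (m - 1)X²g²`, so `g⁶ = (g² - 2(m - 1)X²)G + 4(e'g² - (m - 1)X²e)`
  set g : ℤ[X] := X ^ 2 + X + 1
  set h : ℤ[X] := X ^ 4 + X ^ 2 + 1
  set e : ℤ[X] := 2 * X * g * h + 2 * X ^ 2 * g ^ 2 - C (m - 1) * X ^ 2 * h - 2 * C t * X ^ 4
  set e' : ℤ[X] := X * g * h + X ^ 2 * g ^ 2 + C (m - 1) * X ^ 3 * g - C t * X ^ 4
  refine ⟨g ^ 2 - 2 * C (m - 1) * X ^ 2, e' * g ^ 2 - C (m - 1) * X ^ 2 * e, ?_⟩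
  simp only [g, h, e, e', map_add, map_sub, map_mul, map_pow, map_ofNat, map_one]
  ring

theorem stmt_3_general (a b : ℤ)
    (hmod : (a % 4 = 0 ∧ b % 4 = 1) ∨ (a % 4 = 2 ∧ b % 4 = 3)) :
    ¬ IsMonogenic (X ^ 8 + C a * X ^ 6 + C b * X ^ 4 + C a * X ^ 2 + 1) := by
  obtain ⟨m, t, rfl, rfl⟩ : ∃ m t : ℤ, a = 2 * m ∧ b = 2 * m + 1 + 4 * t :=
    ⟨a / 2, (b - a - 1) / 4, by omega, by omega⟩
  obtain ⟨w, r, h⟩ := exists_sq_cube_eq_mul_add_four_mul m t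
  have hmonic : ((X ^ 2 + X + 1) ^ 3 : ℤ[X]).Monic := by monicity!
  refine not_isMonogenic_of_pow_eq (p := 2) two_pos (hmonic.map _).ne_zero ?_ h
  calc ((X ^ 2 + X + 1) ^ 3 : ℤ[X]).natDegree = 6 := by compute_degree!
    _ < 8 := by norm_num
    _ = _ := by symm; compute_degree!

theorem stmt_3 (a b : ℤ) (ha : a ≠ 0)
    (h1 : Squarefree (b + 2 - 2 * a)) (h2 : Squarefree (b + 2 + 2 * a))
    (h3 : ∀ q : ℕ, q.Prime → q ≠ 2 → ¬ ((q : ℤ) ^ 2 ∣ (a ^ 2 - 4 * b + 8)))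
    (hmod : (a % 4 = 0 ∧ b % 4 = 1) ∨ (a % 4 = 2 ∧ b % 4 = 3)) :
    ¬ IsMonogenic (X ^ 8 + C a * X ^ 6 + C b * X ^ 4 + C a * X ^ 2 + 1) :=
  stmt_3_general a b hmod
end

section
/- Let G(t) ∈ ℤ[t] be a product of pairwise distinct non-constant polynomials that are irreducible over ℤ, each of degree at most 3. If G(t) has a local obstruction at a prime ℓ, then ℓ ≤ (N_ℓ + 2)/2, where N_ℓ is the number of (not necessarily distinct) monic linear factors of the reduction of G(t) modulo ℓ in 𝔽_ℓ[t], counted with multiplicity (i.e., the number of roots of G modulo ℓ counted with multiplicity). -/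
open Polynomial

theorem stmt_4 (G : Polynomial ℤ) (s : Finset (Polynomial ℤ))
    (hGs : G = ∏ p ∈ s, p)
    (hfac : ∀ p ∈ s, Irreducible p ∧ 0 < p.natDegree ∧ p.natDegree ≤ 3)
    (ℓ : ℕ) [Fact ℓ.Prime]
    (hobs : ∀ z : ℤ, ¬ ((ℓ : ℤ) ∣ z) → ((ℓ : ℤ)) ^ 2 ∣ G.eval z) :
    2 * ℓ ≤ (G.map (Int.castRingHom (ZMod ℓ))).roots.card + 2 := by
  have hℓp : ℓ.Prime := Fact.out
  set φ := Int.castRingHom (ZMod ℓ) with hφ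
  -- each factor is primitive
  have hprim : ∀ p ∈ s, p.IsPrimitive := by
    intro p hp
    obtain ⟨hirr, hdeg, -⟩ := hfac p hp
    intro r hr
    obtain ⟨q, hq⟩ := hr
    rcases hirr.isUnit_or_isUnit hq with h | h
    · exact Polynomial.isUnit_C.mp h
    · exfalso
      have h0 : q.natDegree = 0 := Polynomial.natDegree_eq_zero_of_isUnit h
      have h1 := Polynomial.natDegree_mul_le (p := C r) (q := q)
      rw [Polynomial.natDegree_C, ← hq, h0] at h1
      omega
  -- the reduction of G mod ℓ is nonzero
  have hG0 : G.map φ ≠ 0 := by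
    rw [hGs, Polynomial.map_prod]
    apply Finset.prod_ne_zero_iff.mpr
    intro p hp hpz
    have : ∀ n, (ℓ : ℤ) ∣ p.coeff n := by
      intro n
      have := Polynomial.ext_iff.mp hpz n
      rw [Polynomial.coeff_map, Polynomial.coeff_zero] at this
      exact_mod_cast (ZMod.intCast_zmod_eq_zero_iff_dvd _ ℓ).mp this
    have hCd : (C (ℓ : ℤ)) ∣ p := (Polynomial.C_dvd_iff_dvd_coeff _ _).mpr this
    have := hprim p hp _ hCd
    rw [Int.isUnit_iff] at this
    have hℓ2 : 2 ≤ ℓ := hℓp.two_le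
    omega
  -- every nonzero residue has root multiplicity ≥ 2
  have hmult : ∀ a : ℤ, ¬ ((ℓ : ℤ) ∣ a) → 2 ≤ (G.map φ).rootMultiplicity (a : ZMod ℓ) := by
    intro a ha
    have h1 : ((ℓ : ℤ)) ^ 2 ∣ G.eval a := hobs a ha
    have h2 : ((ℓ : ℤ)) ^ 2 ∣ G.eval (a + ℓ) := by
      apply hobs
      intro hd
      exact ha (by simpa using (dvd_add_right (dvd_refl (ℓ : ℤ))).mp (by rwa [add_comm] at hd))
    obtain ⟨k, hk⟩ := G.binomExpansion a (ℓ : ℤ)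
    have hder : (ℓ : ℤ) ∣ G.derivative.eval a := by
      have hd : ((ℓ : ℤ)) ^ 2 ∣ G.derivative.eval a * ℓ := by
        have : G.derivative.eval a * ℓ = G.eval (a + ℓ) - G.eval a - k * (ℓ:ℤ)^2 := by
          rw [hk]; ring
        rw [this]
        exact dvd_sub (dvd_sub h2 h1) (dvd_mul_left _ _)
      have hℓ0 : (ℓ : ℤ) ≠ 0 := by exact_mod_cast hℓp.ne_zero
      rw [pow_two] at hd
      exact (mul_dvd_mul_iff_right hℓ0).mp (by rwa [mul_comm (ℓ:ℤ) (ℓ:ℤ)] at hd)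
    have hroot : (G.map φ).IsRoot (a : ZMod ℓ) := by
      rw [Polynomial.IsRoot, Polynomial.eval_map, Polynomial.eval₂_at_intCast]
      simp only [eq_intCast]
      rw [ZMod.intCast_zmod_eq_zero_iff_dvd]
      exact dvd_trans (dvd_pow_self _ two_ne_zero) h1
    have hroot' : (derivative (G.map φ)).IsRoot (a : ZMod ℓ) := by
      rw [Polynomial.derivative_map, Polynomial.IsRoot, Polynomial.eval_map,
        Polynomial.eval₂_at_intCast]
      simp only [eq_intCast]
      rw [ZMod.intCast_zmod_eq_zero_iff_dvd]
      exact hder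
    exact (one_lt_rootMultiplicity_iff_isRoot hG0).mpr ⟨hroot, hroot'⟩
  -- the set of nonzero residues
  set T : Finset (ZMod ℓ) := Finset.univ.filter (· ≠ 0) with hT
  have hTcard : T.card = ℓ - 1 := by
    have : T = Finset.univ \ {0} := by
      ext x; simp [hT]
    rw [this, Finset.card_sdiff_of_subset (by simp)]
    simp [ZMod.card]
  have hcount : ∀ a ∈ T, 2 ≤ (G.map φ).roots.count a := by
    intro a haT
    have ha0 : a ≠ 0 := by simpa [hT] using haT
    rw [Polynomial.count_roots]
    obtain ⟨z, hz⟩ : ∃ z : ℤ, (z : ZMod ℓ) = a := ⟨(a.val : ℤ), by simp⟩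
    have hzd : ¬ ((ℓ : ℤ) ∣ z) := by
      intro hd
      exact ha0 (by rw [← hz, ZMod.intCast_zmod_eq_zero_iff_dvd]; exact hd)
    rw [← hz]
    exact hmult z hzd
  have hsub : T ⊆ (G.map φ).roots.toFinset := by
    intro a haT
    rw [Multiset.mem_toFinset, ← Multiset.count_pos]
    have := hcount a haT
    omega
  have hsum : 2 * T.card ≤ (G.map φ).roots.card := by
    calc 2 * T.card = ∑ _a ∈ T, 2 := by rw [Finset.sum_const, smul_eq_mul, mul_comm]
    _ ≤ ∑ a ∈ T, (G.map φ).roots.count a := Finset.sum_le_sum hcount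
    _ ≤ ∑ a ∈ (G.map φ).roots.toFinset, (G.map φ).roots.count a := by
        apply Finset.sum_le_sum_of_subset hsub
    _ = (G.map φ).roots.card := Multiset.toFinset_sum_count_eq _
  have hℓ2 : 2 ≤ ℓ := hℓp.two_le
  rw [hTcard] at hsum
  omega
end

section
/- Let a, b ∈ ℤ and suppose the polynomial F(x) = x⁸ + a·x⁴ + b is monogenic. Then b is squarefree; equivalently, if there exists a prime q with q² dividing b, then x⁸ + a·x⁴ + b is not monogenic. -/
/-!
This is an instance of Dedekind's criterion. If `p * p ∣ f(0)` and `p ∣ f'(0)`, write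
`f = X * u + f(0)`, so that `u(θ) / p = -(f(0) / p) / θ`. The reversed polynomial shows that
`(f(0) / p) / θ` is integral, so `u(θ) / p` lies in the ring of integers. If that ring were
`ℤ[θ]`, then `u(θ) / p = h(θ)` would make `f` divide `p * h - u`, hence `f ∣ u` modulo `p`.
This is impossible, because `u` is monic of smaller degree. For `x⁸ + a x⁴ + b` the linear
coefficient vanishes, so every prime `p` with `p * p ∣ b` applies.
-/

open Polynomial

namespace Polynomial

theorem coeff_zero_ne_zero_of_irreducible {k : Type*} [Field k] {F : k[X]} (hF : Irreducible F)
    (hdeg : F.natDegree ≠ 1) : F.coeff 0 ≠ 0 := by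
  intro h0
  obtain ⟨G, rfl⟩ := X_dvd_iff.mpr h0
  have hG : IsUnit G := (hF.isUnit_or_isUnit rfl).resolve_left not_isUnit_X
  rw [natDegree_mul X_ne_zero hG.ne_zero, natDegree_eq_zero_of_isUnit hG, natDegree_X] at hdeg
  exact hdeg rfl

theorem dvd_of_irreducible_map_of_aeval_eq_zero {K : Type*} [Field K] [CharZero K] {f g : ℤ[X]}
    (hf : f.Monic) (hirr : Irreducible (f.map (Int.castRingHom ℚ))) {θ : K}
    (hθ : aeval θ f = 0) (hg : aeval θ g = 0) : f ∣ g := by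
  have hmin : f.map (Int.castRingHom ℚ) = minpoly ℚ θ :=
    minpoly.eq_of_irreducible_of_monic hirr (by rwa [← algebraMap_int_eq, aeval_map_algebraMap])
      (hf.map _)
  rw [← map_dvd_map (Int.castRingHom ℚ) Int.cast_injective hf, hmin]
  exact minpoly.dvd ℚ θ (by rwa [← algebraMap_int_eq, aeval_map_algebraMap])

theorem isIntegral_div_of_aeval_eq_zero {R K : Type*} [CommRing R] [IsDomain R] [Field K]
    [Algebra R K] [FaithfulSMul R K] {f : R[X]} (hf0 : f.coeff 0 ≠ 0) {θ : K}
    (hθ : aeval θ f = 0) {d : R} (hd : ∀ k, 1 ≤ k → f.coeff 0 ∣ f.coeff k * d ^ k) :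
    IsIntegral R (algebraMap R K d / θ) := by
  have hθ0 : θ ≠ 0 := by
    rintro rfl
    rw [← coeff_zero_eq_aeval_zero', FaithfulSMul.algebraMap_eq_zero_iff] at hθ
    exact hf0 hθ
  have : Invertible θ := invertibleOfNonzero hθ0
  -- `d / θ` is a root of `P`, whose coefficients `f.coeff k * d ^ k` are all multiples of its
  -- leading coefficient `f.coeff 0`.
  set P := f.reverse.scaleRoots d
  have hP : aeval (algebraMap R K d / θ) P = 0 := by
    rw [div_eq_mul_inv, ← invOf_eq_inv]
    refine scaleRoots_aeval_eq_zero ?_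
    rwa [aeval_def, eval₂_reverse_eq_zero_iff, ← aeval_def]
  have hnat : f.reverse.natDegree = f.natDegree := by
    rw [reverse_natDegree, natTrailingDegree_eq_zero.mpr (Or.inr hf0), Nat.sub_zero]
  have hdvd : C (f.coeff 0) ∣ P := by
    rw [C_dvd_iff_dvd_coeff]
    intro j
    rw [coeff_scaleRoots, coeff_reverse, hnat]
    rcases le_or_gt j f.natDegree with hj | hj
    · rw [revAt_le hj]
      rcases Nat.eq_zero_or_pos (f.natDegree - j) with h | h
      · rw [h, pow_zero, mul_one]
      · exact hd _ h
    · rw [← revAtFun_eq, revAtFun, if_neg hj.not_ge, coeff_eq_zero_of_natDegree_lt hj, zero_mul]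
      exact dvd_zero _
  obtain ⟨Q, hQ⟩ := hdvd
  have hQmonic : Q.Monic := by
    have := congrArg leadingCoeff hQ
    rw [leadingCoeff_scaleRoots, reverse_leadingCoeff, trailingCoeff,
      natTrailingDegree_eq_zero.mpr (Or.inr hf0), leadingCoeff_mul, leadingCoeff_C] at this
    exact mul_left_cancel₀ hf0 (this.symm.trans (mul_one _).symm)
  refine ⟨Q, hQmonic, ?_⟩
  rw [hQ, map_mul, aeval_C] at hP
  rw [← aeval_def]
  exact (mul_eq_zero.mp hP).resolve_left ((FaithfulSMul.algebraMap_eq_zero_iff R K).not.mpr hf0)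

theorem aeval_divX_mul_self {R A : Type*} [CommRing R] [CommRing A] [Algebra R A] {f : R[X]}
    {x : A} (hx : aeval x f = 0) : aeval x f.divX * x = -algebraMap R A (f.coeff 0) := by
  have := congrArg (aeval x) (divX_mul_X_add f)
  rw [map_add, map_mul, aeval_X, aeval_C, hx] at this
  exact eq_neg_of_add_eq_zero_left this

theorem dvd_coeff_of_aeval_div_mem_adjoin {K : Type*} [Field K] [CharZero K] {f g : ℤ[X]}
    (hf : f.Monic) (hirr : Irreducible (f.map (Int.castRingHom ℚ))) {θ : K}
    (hθ : aeval θ f = 0) (hg : g.natDegree < f.natDegree) {p : ℤ} (hp : p ≠ 0)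
    (hmem : aeval θ g / p ∈ Algebra.adjoin ℤ {θ}) (i : ℕ) : p ∣ g.coeff i := by
  by_cases hu : IsUnit p
  · exact hu.dvd
  have : Nontrivial (ZMod p.natAbs) :=
    ZMod.nontrivial_iff.mpr (mt Int.isUnit_iff_natAbs_eq.mpr hu)
  rw [Algebra.adjoin_singleton_eq_range_aeval] at hmem
  obtain ⟨h, hh⟩ := hmem
  have hdvd : f ∣ C p * h - g := by
    refine dvd_of_irreducible_map_of_aeval_eq_zero hf hirr hθ ?_
    rw [map_sub, map_mul, aeval_C, algebraMap_int_eq, eq_intCast]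
    simp only [AlgHom.toRingHom_eq_coe, RingHom.coe_coe] at hh
    rw [hh, mul_div_cancel₀ _ (Int.cast_ne_zero.mpr hp), sub_self]
  set φ := Int.castRingHom (ZMod p.natAbs)
  have hφp : φ p = 0 := (ZMod.intCast_zmod_eq_zero_iff_dvd _ _).mpr (Int.natAbs_dvd.mpr dvd_rfl)
  have hdvd_mod : f.map φ ∣ g.map φ := by
    have := Polynomial.map_dvd φ hdvd
    rwa [Polynomial.map_sub, Polynomial.map_mul, map_C, hφp, C_0, zero_mul, zero_sub,
      dvd_neg] at this
  have hg0 : g.map φ = 0 := by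
    by_contra hne
    refine (hf.map φ).not_dvd_of_natDegree_lt hne ?_ hdvd_mod
    rw [hf.natDegree_map]
    exact (natDegree_map_le).trans_lt hg
  have := congrArg (coeff · i) hg0
  simp only [coeff_map, coeff_zero] at this
  exact Int.natAbs_dvd.mp ((ZMod.intCast_zmod_eq_zero_iff_dvd _ _).mp this)

end Polynomial

theorem adjoin_ne_integralClosure_of_sq_dvd_coeff_zero {K : Type*} [Field K] [CharZero K]
    {f : ℤ[X]} (hf : f.Monic) (hirr : Irreducible (f.map (Int.castRingHom ℚ))) {θ : K}
    (hθ : aeval θ f = 0) {p : ℤ} (hp : Prime p) (h0 : p * p ∣ f.coeff 0)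
    (h1 : p ∣ f.coeff 1) :
    Algebra.adjoin ℤ {θ} ≠ integralClosure ℤ K := by
  intro hO
  have hdeg1 : f.natDegree ≠ 1 := fun h ↦ hp.not_isUnit (isUnit_of_dvd_one (by
    rwa [← h, ← leadingCoeff, hf.leadingCoeff] at h1))
  have hdeg0 : f.natDegree ≠ 0 := fun h ↦ hirr.not_isUnit (by
    rw [hf.natDegree_eq_zero.mp h, Polynomial.map_one]; exact isUnit_one)
  have hb : f.coeff 0 ≠ 0 := by
    simpa using coeff_zero_ne_zero_of_irreducible hirr (by rwa [hf.natDegree_map])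
  have hθ0 : θ ≠ 0 := by
    rintro rfl
    rw [← coeff_zero_eq_aeval_zero', eq_intCast, Int.cast_eq_zero] at hθ
    exact hb hθ
  obtain ⟨c, hc⟩ := h0
  have hval : aeval θ f.divX / p = -((p * c : ℤ) / θ) := by
    have := aeval_divX_mul_self hθ
    rw [algebraMap_int_eq, eq_intCast, hc] at this
    have hpK : (p : K) ≠ 0 := Int.cast_ne_zero.mpr hp.ne_zero
    field_simp
    push_cast at this ⊢
    linear_combination this
  have hint : IsIntegral ℤ ((p * c : ℤ) / θ) := by
    refine isIntegral_div_of_aeval_eq_zero hb hθ fun k hk ↦ ?_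
    rw [hc]
    rcases hk.eq_or_lt with rfl | hk
    · obtain ⟨e, he⟩ := h1
      exact ⟨e, by rw [he]; ring⟩
    · have hsq : p * p * c ∣ (p * c) ^ 2 := ⟨c, by ring⟩
      exact (hsq.trans (pow_dvd_pow _ hk)).mul_left _
  have hmem : aeval θ f.divX / p ∈ Algebra.adjoin ℤ {θ} := by
    rw [hO, hval]
    exact hint.neg
  have hlt : f.divX.natDegree < f.natDegree := by
    rw [natDegree_divX_eq_natDegree_tsub_one]; omega
  have := dvd_coeff_of_aeval_div_mem_adjoin hf hirr hθ hlt hp.ne_zero hmem (f.natDegree - 1)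
  rw [coeff_divX, Nat.sub_add_cancel (Nat.pos_of_ne_zero hdeg0), ← leadingCoeff,
    hf.leadingCoeff] at this
  exact hp.not_isUnit (isUnit_of_dvd_one this)

theorem stmt_5 (a b : ℤ)
    (hmono : IsMonogenic (X ^ 8 + C a * X ^ 4 + C b)) :
    Squarefree b := by
  obtain ⟨hmonic, hirr, hintegral⟩ := hmono
  rw [squarefree_iff_irreducible_sq_not_dvd_of_exists_irreducible
    ⟨2, Int.prime_two.irreducible⟩]
  intro p hp hpb
  have : Fact (Irreducible _) := ⟨hirr⟩
  have hroot : aeval (AdjoinRoot.root ((X ^ 8 + C a * X ^ 4 + C b).map (Int.castRingHom ℚ)))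
      (X ^ 8 + C a * X ^ 4 + C b) = 0 := by
    rw [← aeval_map_algebraMap ℚ, algebraMap_int_eq]
    exact AdjoinRoot.aeval_eq (R := ℚ) _ |>.trans AdjoinRoot.mk_self
  refine adjoin_ne_integralClosure_of_sq_dvd_coeff_zero hmonic hirr hroot hp.prime
    (by simpa using hpb) (by simp only [coeff_add, coeff_C_mul, coeff_X_pow, coeff_C]; simp)
    (hintegral _ _ hroot AdjoinRoot.adjoinRoot_eq_top)
end
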